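/- Let M be a σ-complete MV-algebra with product (a commutative associative operation · distributing over the partial addition +, with a·1 = a), and let F₁, ..., Fₙ : ℝ → M be one-dimensional spectral resolutions. Then F(s₁,...,sₙ) = ∏_{i=1}^n F_i(s_i) satisfies the volume condition: for all reals a_i ≤ b_i, Δ₁(a₁,b₁)···Δₙ(aₙ,bₙ)F = ∏_{i=1}^n (F_i(b_i) − F_i(a_i)) ≥ 0. -/
import Mathlib


/-- The product of a tuple of elements, folded with a binary operation `mul` with
unit `u` (the top element of `Γ(G,u)`). -/
def foldProd {G : Type*} (mul : G → G → G) (u : G) {n : ℕ} (g : Fin n → G) : G :=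
  (List.ofFn g).foldr mul u

/-- `G` is Dedekind monotone σ-complete. -/
def MonotoneSigmaComplete (G : Type*) [Preorder G] : Prop :=
  ∀ f : ℕ → G, Monotone f → BddAbove (Set.range f) → ∃ s, IsLUB (Set.range f) s

/-- A one-dimensional spectral resolution with values in `Γ(G,u) = [0,u]`. -/
def IsOneDimSR {G : Type*} [Lattice G] [AddCommGroup G] (u : G) (F : ℝ → G) : Prop :=
  (∀ t, F t ∈ Set.Icc (0 : G) u) ∧
  Monotone F ∧
  IsLUB (Set.range F) u ∧
  IsGLB (Set.range F) 0 ∧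
  (∀ t : ℝ, IsLUB (F '' Set.Iio t) (F t))

section Aux

variable {G : Type*} [Lattice G] [AddCommGroup G] [CovariantClass G G (· + ·) (· ≤ ·)]

theorem foldProd_succ (mul : G → G → G) (u : G) {n : ℕ} (g : Fin (n + 1) → G) :
    foldProd mul u g = mul (g 0) (foldProd mul u (fun i => g i.succ)) := by
  simp [foldProd, List.ofFn_succ]

theorem foldProd_mem (mul : G → G → G) (u : G) (hu : (0 : G) ≤ u)
    (hmul_mem : ∀ a ∈ Set.Icc (0 : G) u, ∀ b ∈ Set.Icc (0 : G) u,
      mul a b ∈ Set.Icc (0 : G) u) :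
    ∀ {n : ℕ} (g : Fin n → G), (∀ i, g i ∈ Set.Icc (0 : G) u) →
      foldProd mul u g ∈ Set.Icc (0 : G) u := by
  intro n
  induction n with
  | zero =>
    intro g _
    simpa [foldProd] using Set.mem_Icc.2 ⟨hu, le_rfl⟩
  | succ m ih =>
    intro g hg
    rw [foldProd_succ]
    exact hmul_mem _ (hg 0) _ (ih _ fun i => hg i.succ)

theorem mul_sub_aux (mul : G → G → G) (u : G)
    (hmul_mem : ∀ a ∈ Set.Icc (0 : G) u, ∀ b ∈ Set.Icc (0 : G) u,
      mul a b ∈ Set.Icc (0 : G) u)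
    (hdist : ∀ a b c, a ∈ Set.Icc (0 : G) u → b ∈ Set.Icc (0 : G) u →
      c ∈ Set.Icc (0 : G) u → a + b ≤ u →
      mul (a + b) c = mul a c + mul b c)
    (x y c : G) (hx : x ∈ Set.Icc (0 : G) u) (hy : y ∈ Set.Icc (0 : G) u)
    (hc : c ∈ Set.Icc (0 : G) u) (hxy : x ≤ y) :
    mul (y - x) c = mul y c - mul x c := by
  have hmem : y - x ∈ Set.Icc (0 : G) u :=
    ⟨sub_nonneg.2 hxy, (sub_le_self _ hx.1).trans hy.2⟩
  have h := hdist (y - x) x c hmem hx hc (by rw [sub_add_cancel]; exact hy.2)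
  rw [sub_add_cancel] at h
  exact eq_sub_of_add_eq h.symm

theorem mul_mono_aux (mul : G → G → G) (u : G)
    (hmul_mem : ∀ a ∈ Set.Icc (0 : G) u, ∀ b ∈ Set.Icc (0 : G) u,
      mul a b ∈ Set.Icc (0 : G) u)
    (hdist : ∀ a b c, a ∈ Set.Icc (0 : G) u → b ∈ Set.Icc (0 : G) u →
      c ∈ Set.Icc (0 : G) u → a + b ≤ u →
      mul (a + b) c = mul a c + mul b c)
    (x y c : G) (hx : x ∈ Set.Icc (0 : G) u) (hy : y ∈ Set.Icc (0 : G) u)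
    (hc : c ∈ Set.Icc (0 : G) u) (hxy : x ≤ y) :
    mul x c ≤ mul y c := by
  have hmem : y - x ∈ Set.Icc (0 : G) u :=
    ⟨sub_nonneg.2 hxy, (sub_le_self _ hx.1).trans hy.2⟩
  have h := mul_sub_aux mul u hmul_mem hdist x y c hx hy hc hxy
  have h0 : (0 : G) ≤ mul y c - mul x c := h ▸ (hmul_mem _ hmem _ hc).1
  exact sub_nonneg.1 h0

theorem key_aux (mul : G → G → G) (u : G) (hu : (0 : G) ≤ u)
    (hmul_mem : ∀ a ∈ Set.Icc (0 : G) u, ∀ b ∈ Set.Icc (0 : G) u,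
      mul a b ∈ Set.Icc (0 : G) u)
    (hmul_comm : ∀ a b, mul a b = mul b a)
    (hmul_assoc : ∀ a b c, mul (mul a b) c = mul a (mul b c))
    (hdist : ∀ a b c, a ∈ Set.Icc (0 : G) u → b ∈ Set.Icc (0 : G) u →
      c ∈ Set.Icc (0 : G) u → a + b ≤ u →
      mul (a + b) c = mul a c + mul b c) :
    ∀ {n : ℕ} (X Y : Fin n → G), (∀ i, X i ∈ Set.Icc (0 : G) u) →
      (∀ i, Y i ∈ Set.Icc (0 : G) u) → (∀ i, X i ≤ Y i) →
      ∀ c ∈ Set.Icc (0 : G) u,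
      (∑ φ : Fin n → Bool,
        (-1 : ℤ) ^ (Finset.univ.filter fun i => φ i = false).card •
          mul c (foldProd mul u (fun i => if φ i then Y i else X i)))
        = mul c (foldProd mul u (fun i => Y i - X i)) := by
  intro n
  induction n with
  | zero =>
    intro X Y _ _ _ c _
    simp [foldProd]
  | succ m ih =>
    intro X Y hX hY hXY c hc
    -- notation for tails
    set P : (Fin m → Bool) → G :=
      fun ψ => foldProd mul u (fun i => if ψ i then Y i.succ else X i.succ) with hP
    have hPmem : ∀ ψ, P ψ ∈ Set.Icc (0 : G) u := by
      intro ψ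
      refine foldProd_mem mul u hu hmul_mem _ fun i => ?_
      by_cases h : ψ i <;> simp [h, hX, hY]
    have hXYmem : Y 0 - X 0 ∈ Set.Icc (0 : G) u :=
      ⟨sub_nonneg.2 (hXY 0), (sub_le_self _ (hX 0).1).trans (hY 0).2⟩
    set c' : G := mul c (Y 0 - X 0) with hc'
    have hc'mem : c' ∈ Set.Icc (0 : G) u := hmul_mem _ hc _ hXYmem
    have hcard : ∀ (c0 : Bool) (ψ : Fin m → Bool),
        (Finset.univ.filter fun i => (Fin.cons c0 ψ : Fin (m+1) → Bool) i = false).card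
          = (if c0 = false then 1 else 0)
            + (Finset.univ.filter fun i => ψ i = false).card := by
      intro c0 ψ
      rw [Finset.card_filter, Finset.card_filter, Fin.sum_univ_succ]
      simp
    have hfold : ∀ (c0 : Bool) (ψ : Fin m → Bool),
        foldProd mul u (fun i => if (Fin.cons c0 ψ : Fin (m+1) → Bool) i then Y i else X i)
          = mul (if c0 then Y 0 else X 0) (P ψ) := by
      intro c0 ψ
      rw [foldProd_succ]
      simp [hP]
    have hdiff : ∀ ψ : Fin m → Bool,
        mul c (mul (Y 0) (P ψ)) - mul c (mul (X 0) (P ψ)) = mul c' (P ψ) := by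
      intro ψ
      have hsub : mul (mul c (Y 0) - mul c (X 0)) (P ψ)
          = mul (mul c (Y 0)) (P ψ) - mul (mul c (X 0)) (P ψ) := by
        refine mul_sub_aux mul u hmul_mem hdist _ _ _ (hmul_mem _ hc _ (hX 0))
          (hmul_mem _ hc _ (hY 0)) (hPmem ψ) ?_
        rw [hmul_comm c (X 0), hmul_comm c (Y 0)]
        exact mul_mono_aux mul u hmul_mem hdist _ _ _ (hX 0) (hY 0) hc (hXY 0)
      have hsub2 : mul c (Y 0) - mul c (X 0) = mul c (Y 0 - X 0) := by
        rw [hmul_comm c (Y 0 - X 0), hmul_comm c (Y 0), hmul_comm c (X 0)]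
        exact (mul_sub_aux mul u hmul_mem hdist _ _ _ (hX 0) (hY 0) hc (hXY 0)).symm
      rw [hmul_assoc, hmul_assoc] at hsub
      rw [← hsub, hsub2, hc']
    calc
      (∑ φ : Fin (m + 1) → Bool,
          (-1 : ℤ) ^ (Finset.univ.filter fun i => φ i = false).card •
            mul c (foldProd mul u (fun i => if φ i then Y i else X i)))
          = ∑ p : Bool × (Fin m → Bool),
              (-1 : ℤ) ^ (Finset.univ.filter
                  fun i => (Fin.cons p.1 p.2 : Fin (m+1) → Bool) i = false).card •
                mul c (foldProd mul u
                  (fun i => if (Fin.cons p.1 p.2 : Fin (m+1) → Bool) i then Y i else X i)) := by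
        exact (Fintype.sum_equiv (Fin.consEquiv fun _ => Bool) _ _ fun p => rfl).symm
      _ = ∑ ψ : Fin m → Bool,
            ((-1 : ℤ) ^ (Finset.univ.filter fun i => ψ i = false).card •
                mul c (mul (Y 0) (P ψ))
              + -((-1 : ℤ) ^ (Finset.univ.filter fun i => ψ i = false).card •
                mul c (mul (X 0) (P ψ)))) := by
        rw [Fintype.sum_prod_type, Fintype.sum_bool, ← Finset.sum_add_distrib]
        refine Finset.sum_congr rfl fun ψ _ => ?_
        rw [hcard, hcard, hfold, hfold]
        simp [pow_add, pow_succ, neg_smul]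
      _ = ∑ ψ : Fin m → Bool,
            (-1 : ℤ) ^ (Finset.univ.filter fun i => ψ i = false).card •
              mul c' (P ψ) := by
        refine Finset.sum_congr rfl fun ψ _ => ?_
        rw [← hdiff ψ, smul_sub, sub_eq_add_neg]
      _ = mul c' (foldProd mul u (fun i => Y i.succ - X i.succ)) := by
        exact ih (fun i => X i.succ) (fun i => Y i.succ) (fun i => hX i.succ)
          (fun i => hY i.succ) (fun i => hXY i.succ) c' hc'mem
      _ = mul c (foldProd mul u (fun i => Y i - X i)) := by
        rw [hc', hmul_assoc, foldProd_succ mul u (fun i => Y i - X i)]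

end Aux

/-- Let `M = Γ(G,u)` be a σ-complete MV-algebra with product `mul` (commutative,
associative, distributing over the partial addition, with `a·u = a`), and let
`F₁,…,Fₙ` be one-dimensional spectral resolutions. Then
`F(s₁,…,sₙ) = ∏ᵢ Fᵢ(sᵢ)` satisfies the volume condition: for all `aᵢ ≤ bᵢ`,
`Δ₁(a₁,b₁)⋯Δₙ(aₙ,bₙ)F = ∏ᵢ (Fᵢ(bᵢ) − Fᵢ(aᵢ)) ≥ 0`. -/
theorem product_of_spectral_resolutions_volume {G : Type*}
    [Lattice G] [AddCommGroup G] [CovariantClass G G (· + ·) (· ≤ ·)]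
    (hσ : MonotoneSigmaComplete G) (u : G) (hu : (0 : G) ≤ u)
    (mul : G → G → G)
    (hmul_mem : ∀ a ∈ Set.Icc (0 : G) u, ∀ b ∈ Set.Icc (0 : G) u,
      mul a b ∈ Set.Icc (0 : G) u)
    (hmul_comm : ∀ a b, mul a b = mul b a)
    (hmul_assoc : ∀ a b c, mul (mul a b) c = mul a (mul b c))
    (hmul_one : ∀ a ∈ Set.Icc (0 : G) u, mul a u = a)
    (hdist : ∀ a b c, a ∈ Set.Icc (0 : G) u → b ∈ Set.Icc (0 : G) u →
      c ∈ Set.Icc (0 : G) u → a + b ≤ u →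
      mul (a + b) c = mul a c + mul b c)
    {n : ℕ} (F : Fin n → ℝ → G) (hF : ∀ i, IsOneDimSR u (F i))
    (a b : Fin n → ℝ) (hab : ∀ i, a i ≤ b i) :
    (∑ φ : Fin n → Bool,
      (-1 : ℤ) ^ (Finset.univ.filter fun i => φ i = false).card •
        foldProd mul u (fun i => F i (if φ i then b i else a i)))
      = foldProd mul u (fun i => F i (b i) - F i (a i)) ∧
    0 ≤ foldProd mul u (fun i => F i (b i) - F i (a i)) := by
  have hX : ∀ i, F i (a i) ∈ Set.Icc (0 : G) u := fun i => (hF i).1 _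
  have hY : ∀ i, F i (b i) ∈ Set.Icc (0 : G) u := fun i => (hF i).1 _
  have hXY : ∀ i, F i (a i) ≤ F i (b i) := fun i => (hF i).2.1 (hab i)
  have hdmem : ∀ i, F i (b i) - F i (a i) ∈ Set.Icc (0 : G) u := fun i =>
    ⟨sub_nonneg.2 (hXY i), (sub_le_self _ (hX i).1).trans (hY i).2⟩
  have hfmem : foldProd mul u (fun i => F i (b i) - F i (a i)) ∈ Set.Icc (0 : G) u :=
    foldProd_mem mul u hu hmul_mem _ hdmem
  have hone : ∀ x ∈ Set.Icc (0 : G) u, mul u x = x := fun x hx =>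
    (hmul_comm u x).trans (hmul_one x hx)
  constructor
  · have hk := key_aux mul u hu hmul_mem hmul_comm hmul_assoc hdist
      (fun i => F i (a i)) (fun i => F i (b i)) hX hY hXY u ⟨hu, le_rfl⟩
    calc
      (∑ φ : Fin n → Bool,
          (-1 : ℤ) ^ (Finset.univ.filter fun i => φ i = false).card •
            foldProd mul u (fun i => F i (if φ i then b i else a i)))
        = ∑ φ : Fin n → Bool,
            (-1 : ℤ) ^ (Finset.univ.filter fun i => φ i = false).card •
              mul u (foldProd mul u
                (fun i => if φ i then F i (b i) else F i (a i))) := by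
          refine Finset.sum_congr rfl fun φ _ => ?_
          have harg : (fun i => F i (if φ i then b i else a i))
              = fun i => if φ i then F i (b i) else F i (a i) := by
            funext i; by_cases h : φ i <;> simp [h]
          rw [harg, hone _ (foldProd_mem mul u hu hmul_mem _ fun i => by
            by_cases h : φ i <;> simp [h, hX, hY])]
      _ = mul u (foldProd mul u (fun i => F i (b i) - F i (a i))) := hk
      _ = foldProd mul u (fun i => F i (b i) - F i (a i)) := hone _ hfmem
  · exact hfmem.1
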